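/- In any reachable configuration of the SCDS transition system compiled from a social contract SC, the message store contains exactly the addressed messages (v, u(a)) such that the act u(a) appears in the diagonal history of u but not yet in the history of v, for all u ≠ v: that is, the message store equals the difference between each agent's authoritative diagonal and the other agents' views. -/

import Mathlib

/-- A compiled-SCDS configuration: each agent's state is its history (a list of acts
`(author, action)`), and the store keeps, per ordered pair `(sender, recipient)`,
the FIFO queue of in-flight acts. -/
structure CConfig (V A : Type*) where
  hist : V → List (V × A)
  queue : V → V → List (V × A)

variable {V A : Type*}

/-- `h` restricted to acts authored by `u`. -/
def restrictH [DecidableEq V] (h : List (V × A)) (u : V) : List (V × A) :=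
  h.filter (fun m => m.1 = u)

/-- A step of the compiled SCDS; `P v h a` is the (output-closed) enabling condition
for agent `v` with history `h` to output act `v(a)`. -/
def CStep [DecidableEq V] (P : V → List (V × A) → A → Prop)
    (c c' : CConfig V A) : Prop :=
  -- output v-transition: append v(a) to s_v and send (w, v(a)) to every w ≠ v
  (∃ (v : V) (a : A), P v (c.hist v) a ∧
    c'.hist = Function.update c.hist v (c.hist v ++ [(v, a)]) ∧
    c'.queue = fun x y => if x = v ∧ y ≠ v then c.queue x y ++ [(v, a)] else c.queue x y) ∨
  -- input v-transition: consume the oldest in-flight message from u to v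
  (∃ (u v : V) (m : V × A) (rest : List (V × A)), u ≠ v ∧
    c.queue u v = m :: rest ∧
    c'.hist = Function.update c.hist v (c.hist v ++ [m]) ∧
    c'.queue = fun x y => if x = u ∧ y = v then rest else c.queue x y)

/-- Reachability from the initial configuration (all histories empty, empty store). -/
def CReachable [DecidableEq V] (P : V → List (V × A) → A → Prop)
    (c : CConfig V A) : Prop :=
  Relation.ReflTransGen (CStep P) ⟨fun _ => [], fun _ _ => []⟩ c

/-! For `u ≠ v`, `v`'s record of `u`'s acts followed by the queue from `u` to `v` is `u`'s own
record of its acts. An output by `u` appends the same act to both sides, and an input by `v`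
moves the head of the queue to the end of `v`'s record; the formula for the store follows by
cancelling the common prefix. -/

section Invariant

variable [DecidableEq V]

theorem restrictH_append_singleton (h : List (V × A)) (m : V × A) (u : V) :
    restrictH (h ++ [m]) u = if m.1 = u then restrictH h u ++ [m] else restrictH h u := by
  by_cases hm : m.1 = u <;> simp [restrictH, hm]

theorem fst_eq_of_mem_restrictH {h : List (V × A)} {u : V} {m : V × A}
    (hm : m ∈ restrictH h u) : m.1 = u := by
  simpa using (List.mem_filter.mp hm).2

theorem restrictH_update_append_of_fst_ne (h : V → List (V × A)) (v w u : V) {m : V × A}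
    (hm : m.1 ≠ u) : restrictH (Function.update h v (h v ++ [m]) w) u = restrictH (h w) u := by
  rcases eq_or_ne w v with rfl | hw
  · simp [restrictH_append_singleton, hm]
  · rw [Function.update_of_ne hw]

def CConfig.Consistent (c : CConfig V A) : Prop :=
  ∀ u v : V, u ≠ v → restrictH (c.hist v) u ++ c.queue u v = restrictH (c.hist u) u

theorem CConfig.Consistent.fst_eq_of_mem_queue {c : CConfig V A} (hc : c.Consistent)
    {u v : V} (huv : u ≠ v) {m : V × A} (hm : m ∈ c.queue u v) : m.1 = u :=
  fst_eq_of_mem_restrictH (hc u v huv ▸ List.mem_append_right _ hm)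

theorem CConfig.Consistent.output {c : CConfig V A} (hc : c.Consistent) (v : V) (a : A) :
    CConfig.Consistent
      ⟨Function.update c.hist v (c.hist v ++ [(v, a)]),
        fun x y => if x = v ∧ y ≠ v then c.queue x y ++ [(v, a)] else c.queue x y⟩ := by
  intro u w huw
  dsimp only
  rcases eq_or_ne u v with rfl | hu
  · rw [Function.update_self, Function.update_of_ne huw.symm, if_pos ⟨rfl, huw.symm⟩,
      restrictH_append_singleton, if_pos rfl, ← List.append_assoc, hc u w huw]
  · rw [restrictH_update_append_of_fst_ne _ _ _ _ hu.symm,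
      restrictH_update_append_of_fst_ne _ _ _ _ hu.symm, if_neg (hu ∘ And.left)]
    exact hc u w huw

theorem CConfig.Consistent.input {c : CConfig V A} (hc : c.Consistent) {u v : V}
    (huv : u ≠ v) {m : V × A} {rest : List (V × A)} (hq : c.queue u v = m :: rest) :
    CConfig.Consistent
      ⟨Function.update c.hist v (c.hist v ++ [m]),
        fun x y => if x = u ∧ y = v then rest else c.queue x y⟩ := by
  have hm : m.1 = u := hc.fst_eq_of_mem_queue huv (hq ▸ List.mem_cons_self)
  intro p w hpw
  dsimp only
  rcases eq_or_ne p u with rfl | hp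
  · rw [Function.update_of_ne huv]
    rcases eq_or_ne w v with rfl | hw
    · rw [Function.update_self, if_pos ⟨rfl, rfl⟩, restrictH_append_singleton, if_pos hm,
        ← hc p w hpw, hq, List.append_assoc, List.singleton_append]
    · rw [Function.update_of_ne hw, if_neg (hw ∘ And.right)]
      exact hc p w hpw
  · rw [restrictH_update_append_of_fst_ne _ _ _ _ (hm ▸ hp.symm),
      restrictH_update_append_of_fst_ne _ _ _ _ (hm ▸ hp.symm), if_neg (hp ∘ And.left)]
    exact hc p w hpw

theorem CConfig.Consistent.of_step {P : V → List (V × A) → A → Prop} {c c' : CConfig V A}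
    (hc : c.Consistent) (hs : CStep P c c') : c'.Consistent := by
  obtain ⟨hist, queue⟩ := c'
  rcases hs with ⟨v, a, -, rfl, rfl⟩ | ⟨u, v, m, rest, huv, hq, rfl, rfl⟩
  · exact hc.output v a
  · exact hc.input huv hq

theorem CReachable.consistent {P : V → List (V × A) → A → Prop} {c : CConfig V A}
    (hc : CReachable P c) : c.Consistent := by
  induction hc with
  | refl => intro u v _; rfl
  | tail _ hs ih => exact ih.of_step hs

end Invariant

/-- State determines message store: in every reachable configuration, the in-flight
messages from `u` addressed to `v` are exactly the acts in `u`'s diagonal `s_u[u]`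
beyond the prefix `s_v[u]` already seen by `v`. -/
theorem store_is_diagonal_difference [DecidableEq V]
    (P : V → List (V × A) → A → Prop) (c : CConfig V A)
    (hc : CReachable P c) :
    ∀ u v : V, u ≠ v →
      c.queue u v =
        (restrictH (c.hist u) u).drop (restrictH (c.hist v) u).length := by
  intro u v huv
  rw [← hc.consistent u v huv, List.drop_left]
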